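/- arXiv:1205.1296 — 5 statements merged into one kernel-verified Lean document; each statement's English description precedes it below -/
import Mathlib

section
/- Let $\Delta(t,t') = -\sin(\omega(t-t'))/\omega$ be the Pauli–Jordan kernel of the simple harmonic oscillator with frequency $\omega > 0$, restricted to the interval $[-T,T]$, and let $u(t) = e^{-i\omega t}/\sqrt{2\omega}$. Then the integral operator $i\Delta$ on $L^2([-T,T])$ has exactly two nonzero eigenvalues $\pm\lambda$ with $\lambda = \sqrt{\langle u,u\rangle^2 - |\langle u,\bar u\rangle|^2}$, where $\langle f,g\rangle = \int_{-T}^T \overline{f(t)} g(t)\,dt$. -/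
open MeasureTheory

noncomputable section

/-- The S-J mode function `u(t) = e^{-iωt}/√(2ω)` of the simple harmonic oscillator. -/
def shoMode (ω : ℝ) (t : ℝ) : ℂ := Complex.exp (-(ω * t) * Complex.I) / (Real.sqrt (2 * ω) : ℂ)

/-- The `L²` inner product `⟨f,g⟩ = ∫_{-T}^T conj (f t) * g t dt`. -/
def ipT (T : ℝ) (f g : ℝ → ℂ) : ℂ := ∫ t in (-T)..T, (starRingEnd ℂ) (f t) * g t

/-- The operator `i∆` with Pauli–Jordan kernel `∆(t,t') = -sin(ω(t-t'))/ω` on `[-T,T]`. -/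
def iDeltaSHO (ω T : ℝ) (f : ℝ → ℂ) (t : ℝ) : ℂ :=
  Complex.I * ∫ t' in (-T)..T, ((-(Real.sin (ω * (t - t')) / ω) : ℝ) : ℂ) * f t'

/-!
Since `i∆(t,t') = u(t) ū(t') - ū(t) u(t')`, the operator is `i∆ f = u ⟨u,f⟩ - ū ⟨ū,f⟩`. An
eigenfunction with eigenvalue `μ ≠ 0` is thus a combination `α u - β ū`, and `(α, β)` is an
eigenvector of the matrix `[[A, -B], [B̄, -A]]` with `A = ⟨u,u⟩`, `B = ⟨u,ū⟩`; its eigenvalues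
satisfy `μ² = A² - |B|²`, which is nonnegative because `|B| = |∫ ū²| ≤ ∫ |u|² = A`.
-/

open ComplexConjugate Set

def HasEigenfunctionOn (K : (ℝ → ℂ) → ℝ → ℂ) (T : ℝ) (μ : ℂ) : Prop :=
  ∃ f : ℝ → ℂ, ContinuousOn f (Icc (-T) T) ∧ (∃ t ∈ Icc (-T) T, f t ≠ 0) ∧
    ∀ t ∈ Icc (-T) T, K f t = μ * f t

lemma hasEigenfunctionOn_congr {K K' : (ℝ → ℂ) → ℝ → ℂ} {T : ℝ} {μ : ℂ}
    (h : ∀ f, ContinuousOn f (Icc (-T) T) → ∀ t ∈ Icc (-T) T, K f t = K' f t) :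
    HasEigenfunctionOn K T μ ↔ HasEigenfunctionOn K' T μ := by
  refine exists_congr fun f => and_congr_right fun hf => and_congr_right fun _ => ?_
  exact forall₂_congr fun t ht => by rw [h f hf t ht]

lemma sq_eq_of_pair_eigen {A B C μ α β : ℂ} (hne : α ≠ 0 ∨ β ≠ 0)
    (h₁ : α * A - β * B = μ * α) (h₂ : α * C - β * A = μ * β) :
    μ ^ 2 = A ^ 2 - B * C := by
  have hα : (μ ^ 2 - (A ^ 2 - B * C)) * α = 0 := by
    linear_combination -(μ + A) * h₁ + B * h₂
  have hβ : (μ ^ 2 - (A ^ 2 - B * C)) * β = 0 := by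
    linear_combination -C * h₁ + (A - μ) * h₂
  rcases hne with hne | hne
  · exact sub_eq_zero.1 ((mul_eq_zero.1 hα).resolve_right hne)
  · exact sub_eq_zero.1 ((mul_eq_zero.1 hβ).resolve_right hne)

-- The witnesses are the columns of the adjugate of `M - μ` for `M = [[A, -B], [C, -A]]`;
-- they cannot both vanish since `μ ≠ 0`.
lemma exists_pair_eigen {A B C μ : ℂ} (hμ : μ ≠ 0) (h : μ ^ 2 = A ^ 2 - B * C) :
    ∃ α β : ℂ, (α ≠ 0 ∨ β ≠ 0) ∧ α * A - β * B = μ * α ∧ α * C - β * A = μ * β := by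
  by_cases hA : A + μ = 0
  · refine ⟨B, A - μ, Or.inr fun h' => hμ ?_, by ring, by linear_combination h⟩
    linear_combination (hA - h') / 2
  · exact ⟨A + μ, C, Or.inl hA, by linear_combination -h, by ring⟩

lemma ipT_const_mul (T : ℝ) (g f : ℝ → ℂ) (c : ℂ) :
    ipT T g (fun t => c * f t) = c * ipT T g f := by
  simp only [ipT, mul_left_comm _ c, intervalIntegral.integral_const_mul]

lemma ipT_congr {T : ℝ} (hT : -T ≤ T) (g : ℝ → ℂ) {f f' : ℝ → ℂ}
    (h : EqOn f f' (Icc (-T) T)) : ipT T g f = ipT T g f' :=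
  intervalIntegral.integral_congr fun t ht => by
    rw [uIcc_of_le hT] at ht
    simp only [h ht]

lemma ipT_sub {T : ℝ} {g f₁ f₂ : ℝ → ℂ} (hg : Continuous g)
    (h₁ : IntervalIntegrable f₁ volume (-T) T) (h₂ : IntervalIntegrable f₂ volume (-T) T) :
    ipT T g (fun t => f₁ t - f₂ t) = ipT T g f₁ - ipT T g f₂ := by
  have hg' : ContinuousOn (fun t => conj (g t)) (uIcc (-T) T) :=
    (Complex.continuous_conj.comp hg).continuousOn
  simp only [ipT, mul_sub]
  exact intervalIntegral.integral_sub (h₁.continuousOn_mul hg') (h₂.continuousOn_mul hg')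

lemma ipT_conj_conj (T : ℝ) (u : ℝ → ℂ) :
    ipT T (fun s => conj (u s)) (fun s => conj (u s)) = ipT T u u := by
  simp only [ipT, Complex.conj_conj, mul_comm]

lemma ipT_conj_left (T : ℝ) (u : ℝ → ℂ) :
    ipT T (fun s => conj (u s)) u = conj (ipT T u (fun s => conj (u s))) := by
  simp only [ipT, ← intervalIntegral.intervalIntegral_conj, map_mul, Complex.conj_conj]

lemma ipT_self (T : ℝ) (u : ℝ → ℂ) :
    ipT T u u = ((∫ t in (-T)..T, ‖u t‖ ^ 2 : ℝ) : ℂ) := by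
  simp only [ipT, Complex.conj_mul', ← Complex.ofReal_pow, intervalIntegral.integral_ofReal]

lemma norm_ipT_conj_le {T : ℝ} (hT : -T ≤ T) (u : ℝ → ℂ) :
    ‖ipT T u (fun s => conj (u s))‖ ≤ ‖ipT T u u‖ :=
  calc ‖ipT T u (fun s => conj (u s))‖
      ≤ ∫ t in (-T)..T, ‖conj (u t) * conj (u t)‖ :=
        intervalIntegral.norm_integral_le_integral_norm hT
    _ = ∫ t in (-T)..T, ‖u t‖ ^ 2 := by simp only [norm_mul, Complex.norm_conj, sq]
    _ ≤ ‖ipT T u u‖ := by rw [ipT_self, Complex.norm_real]; exact le_abs_self _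

lemma modePair_discriminant (T : ℝ) (u : ℝ → ℂ) :
    ipT T u u ^ 2 - ipT T u (fun s => conj (u s)) * ipT T (fun s => conj (u s)) u
      = ((‖ipT T u u‖ ^ 2 - ‖ipT T u (fun s => conj (u s))‖ ^ 2 : ℝ) : ℂ) := by
  rw [ipT_conj_left, Complex.mul_conj', ipT_self, Complex.norm_real, Real.norm_eq_abs, sq_abs]
  push_cast
  ring

def modePairOp (T : ℝ) (u f : ℝ → ℂ) (t : ℝ) : ℂ :=
  u t * ipT T u f - conj (u t) * ipT T (fun s => conj (u s)) f

section ModePair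

variable {T : ℝ} {u : ℝ → ℂ}

lemma ipT_modes_lincomb {g : ℝ → ℂ} (hg : Continuous g) (hu : Continuous u) (α β : ℂ) :
    ipT T g (fun t => α * u t - β * conj (u t))
      = α * ipT T g u - β * ipT T g (fun s => conj (u s)) := by
  have h₁ : Continuous fun t => α * u t := continuous_const.mul hu
  have h₂ : Continuous fun t => β * conj (u t) :=
    continuous_const.mul (Complex.continuous_conj.comp hu)
  rw [ipT_sub hg (h₁.intervalIntegrable _ _) (h₂.intervalIntegrable _ _), ipT_const_mul,
    ipT_const_mul]

theorem hasEigenfunctionOn_modePairOp_iff (hT : -T ≤ T) (hu : Continuous u) {μ : ℂ}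
    (hμ : μ ≠ 0) :
    HasEigenfunctionOn (modePairOp T u) T μ ↔
      μ ^ 2 = ipT T u u ^ 2 - ipT T u (fun s => conj (u s)) * ipT T (fun s => conj (u s)) u := by
  have hū : Continuous fun s => conj (u s) := Complex.continuous_conj.comp hu
  constructor
  · rintro ⟨f, -, ⟨t₀, ht₀, hft₀⟩, heig⟩
    set α := ipT T u f
    set β := ipT T (fun s => conj (u s)) f
    have hμf : EqOn (fun t => μ * f t) (fun t => α * u t - β * conj (u t)) (Icc (-T) T) :=
      fun t ht => by simp only [← heig t ht, modePairOp]; ring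
    have hcoord : ∀ g, Continuous g →
        μ * ipT T g f = α * ipT T g u - β * ipT T g (fun s => conj (u s)) := fun g hg => by
      rw [← ipT_const_mul, ipT_congr hT g hμf, ipT_modes_lincomb hg hu]
    refine sq_eq_of_pair_eigen ?_ (hcoord u hu).symm ?_
    · by_contra! h0
      simpa [h0.1, h0.2, hμ, hft₀] using hμf ht₀
    · rw [← ipT_conj_conj T u]
      exact (hcoord _ hū).symm
  · intro h
    obtain ⟨α, β, hne, h₁, h₂⟩ := exists_pair_eigen hμ h
    have hcoord₁ : ipT T u (fun t => α * u t - β * conj (u t)) = μ * α := by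
      rw [ipT_modes_lincomb hu hu, h₁]
    have hcoord₂ : ipT T (fun s => conj (u s)) (fun t => α * u t - β * conj (u t)) = μ * β := by
      rw [ipT_modes_lincomb hū hu, ipT_conj_conj, h₂]
    refine ⟨fun t => α * u t - β * conj (u t),
      ((continuous_const.mul hu).sub (continuous_const.mul hū)).continuousOn, ?_,
      fun t _ => by simp only [modePairOp, hcoord₁, hcoord₂]; ring⟩
    by_contra! h0
    have hzero : ∀ g, ipT T g (fun t => α * u t - β * conj (u t)) = 0 := fun g => by
      rw [ipT_congr hT g (f' := fun _ => 0) h0]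
      simp [ipT]
    rcases hne with hne | hne
    · exact hne ((mul_eq_zero.1 (hcoord₁ ▸ hzero u)).resolve_left hμ)
    · exact hne ((mul_eq_zero.1 (hcoord₂ ▸ hzero _)).resolve_left hμ)

end ModePair

lemma continuous_shoMode (ω : ℝ) : Continuous (shoMode ω) := by
  unfold shoMode
  fun_prop

lemma conj_shoMode (ω t : ℝ) : conj (shoMode ω t) = shoMode ω (-t) := by
  simp only [shoMode, map_div₀, ← Complex.exp_conj, map_mul, map_neg, Complex.conj_ofReal,
    Complex.conj_I, Complex.ofReal_neg]
  ring_nf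

lemma shoMode_mul_shoMode {ω : ℝ} (hω : 0 ≤ ω) (t s : ℝ) :
    shoMode ω t * shoMode ω s = Complex.exp (-(ω * (t + s)) * Complex.I) / (2 * ω) := by
  have hsq : (Real.sqrt (2 * ω) : ℂ) * Real.sqrt (2 * ω) = 2 * ω := by
    rw [← Complex.ofReal_mul, Real.mul_self_sqrt (by positivity)]
    push_cast
    ring
  rw [shoMode, shoMode, div_mul_div_comm, hsq, ← Complex.exp_add]
  ring_nf

lemma shoMode_kernel {ω : ℝ} (hω : 0 < ω) (t s : ℝ) :
    Complex.I * ((-(Real.sin (ω * (t - s)) / ω) : ℝ) : ℂ)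
      = shoMode ω t * conj (shoMode ω s) - conj (shoMode ω t) * shoMode ω s := by
  rw [conj_shoMode, conj_shoMode, shoMode_mul_shoMode hω.le, shoMode_mul_shoMode hω.le]
  have hω' : (ω : ℂ) ≠ 0 := Complex.ofReal_ne_zero.2 hω.ne'
  push_cast
  rw [show -(ω * (-t + s) : ℂ) = ω * (t - s) by ring, Complex.sin]
  generalize Complex.exp (-(ω * (t - s)) * Complex.I) = a
  generalize Complex.exp (ω * (t - s) * Complex.I) = b
  field_simp
  linear_combination (b - a) * Complex.I_sq

lemma iDeltaSHO_eq_modePairOp {ω T : ℝ} (hω : 0 < ω) {f : ℝ → ℂ}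
    (hf : IntervalIntegrable f volume (-T) T) (t : ℝ) :
    iDeltaSHO ω T f t = modePairOp T (shoMode ω) f t := by
  have hu := continuous_shoMode ω
  have hū : Continuous fun s => conj (shoMode ω s) := Complex.continuous_conj.comp hu
  rw [iDeltaSHO, ← intervalIntegral.integral_const_mul, modePairOp, ipT, ipT,
    ← intervalIntegral.integral_const_mul, ← intervalIntegral.integral_const_mul,
    ← intervalIntegral.integral_sub]
  · refine intervalIntegral.integral_congr fun s _ => ?_
    simp only [← mul_assoc, shoMode_kernel hω, Complex.conj_conj]
    ring
  · exact (hf.continuousOn_mul hū.continuousOn).const_mul _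
  · exact (hf.continuousOn_mul (by simpa only [Complex.conj_conj] using hu.continuousOn)).const_mul _

/-- The operator `i∆` of the simple harmonic oscillator restricted to `[-T,T]` has exactly
two nonzero eigenvalues `±λ`, where `λ = √(⟨u,u⟩² - |⟨u,ū⟩|²)`. -/
theorem sho_iDelta_eigenvalues (ω T : ℝ) (hω : 0 < ω) (hT : 0 < T) (lam : ℝ)
    (hlam : lam = Real.sqrt (‖ipT T (shoMode ω) (shoMode ω)‖ ^ 2
      - ‖ipT T (shoMode ω) (fun t => (starRingEnd ℂ) (shoMode ω t))‖ ^ 2)) :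
    ∀ μ : ℂ, μ ≠ 0 →
      ((∃ f : ℝ → ℂ, ContinuousOn f (Set.Icc (-T) T) ∧ (∃ t ∈ Set.Icc (-T) T, f t ≠ 0) ∧
          ∀ t ∈ Set.Icc (-T) T, iDeltaSHO ω T f t = μ * f t)
        ↔ (μ = (lam : ℂ) ∨ μ = -(lam : ℂ))) := by
  intro μ hμ
  have hT' : -T ≤ T := by linarith
  have hD : 0 ≤ ‖ipT T (shoMode ω) (shoMode ω)‖ ^ 2
      - ‖ipT T (shoMode ω) (fun t => conj (shoMode ω t))‖ ^ 2 :=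
    sub_nonneg.2 (pow_le_pow_left₀ (norm_nonneg _) (norm_ipT_conj_le hT' _) 2)
  change HasEigenfunctionOn (iDeltaSHO ω T) T μ ↔ _
  rw [hasEigenfunctionOn_congr fun f hf t _ =>
      iDeltaSHO_eq_modePairOp hω (hf.intervalIntegrable_of_Icc hT') t,
    hasEigenfunctionOn_modePairOp_iff hT' (continuous_shoMode ω) hμ, modePair_discriminant,
    ← sq_eq_sq_iff_eq_or_eq_neg, hlam, ← Complex.ofReal_pow, Real.sq_sqrt hD]
end
end

section
/- Let $K = i\Delta$ be a Hermitian Hilbert–Schmidt kernel on $L^2(M)$ with purely imaginary kernel (so nonzero eigenvalues come in pairs $\pm\lambda_k$ with eigenfunctions $T_k$, $\overline{T_k}$). Then the kernel decomposes as $i\Delta(x,y) = \sum_{k:\lambda_k>0} \lambda_k\big(T_k(x)\overline{T_k(y)} - \overline{T_k(x)} T_k(y)\big)$, with convergence in $L^2(M\times M)$. -/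
/-!
The functions `T k` and `conj (T k)` together form an orthonormal basis `(u a)` of `L²(μ)`, and
since `K` is purely imaginary, `conj (T k)` is an eigenfunction of the integral operator with
eigenvalue `-λ k`. The products `u a x * conj (u b y)` form an orthonormal basis of `L²(μ × μ)`:
for `v` orthogonal to all of them, Fubini makes each partial integral
`x ↦ ∫ conj (u b y) * v (x, y) dy` orthogonal to every `u a`, hence zero, so almost every slice
of `v` vanishes. The eigenvalue equation makes the coefficient of `K` on `u a ⊗ conj (u b)` equal
to `λ_b δ_ab`, so `K = ∑ₐ λₐ uₐ ⊗ conj uₐ` in `L²`; grouping each `T k` with `conj (T k)` gives the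
stated partial sums.
-/

open MeasureTheory ComplexConjugate Filter Topology
open scoped InnerProductSpace ENNReal

namespace MeasureTheory

variable {α : Type*} [MeasurableSpace α] {μ : Measure α}

theorem MemLp.conj {f : α → ℂ} (hf : MemLp f 2 μ) : MemLp (fun x => conj (f x)) 2 μ :=
  hf.star

theorem MemLp.integrable_conj_mul {f g : α → ℂ} (hf : MemLp f 2 μ) (hg : MemLp g 2 μ) :
    Integrable (fun x => conj (f x) * g x) μ :=
  hf.conj.integrable_mul hg

theorem MemLp.integrable_sq_norm {f : α → ℂ} (hf : MemLp f 2 μ) :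
    Integrable (fun x => ‖f x‖ ^ 2) μ :=
  (memLp_two_iff_integrable_sq_norm hf.1).mp hf

theorem MemLp.inner_toLp_eq_integral {f : α → ℂ} (hf : MemLp f 2 μ) (g : Lp ℂ 2 μ) :
    ⟪hf.toLp f, g⟫_ℂ = ∫ x, conj (f x) * g x ∂μ := by
  rw [L2.inner_def]
  refine integral_congr_ae ?_
  filter_upwards [hf.coeFn_toLp] with x hx
  rw [hx, RCLike.inner_apply, mul_comm]

theorem MemLp.inner_toLp_toLp {f g : α → ℂ} (hf : MemLp f 2 μ) (hg : MemLp g 2 μ) :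
    ⟪hf.toLp f, hg.toLp g⟫_ℂ = ∫ x, conj (f x) * g x ∂μ := by
  rw [hf.inner_toLp_eq_integral]
  refine integral_congr_ae ?_
  filter_upwards [hg.coeFn_toLp] with x hx
  rw [hx]

theorem MemLp.sq_norm_toLp {f : α → ℂ} (hf : MemLp f 2 μ) :
    ‖hf.toLp f‖ ^ 2 = ∫ x, ‖f x‖ ^ 2 ∂μ := by
  rw [← inner_self_eq_norm_sq (𝕜 := ℂ), hf.inner_toLp_toLp,
    ← integral_re (hf.integrable_conj_mul hf)]
  simp_rw [RCLike.conj_mul, ← RCLike.ofReal_pow, RCLike.ofReal_re]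

theorem sq_norm_integral_mul_le {f g : α → ℂ} (hf : MemLp f 2 μ) (hg : MemLp g 2 μ) :
    ‖∫ x, f x * g x ∂μ‖ ^ 2 ≤ (∫ x, ‖f x‖ ^ 2 ∂μ) * ∫ x, ‖g x‖ ^ 2 ∂μ := by
  have h := norm_inner_le_norm (𝕜 := ℂ) (hf.conj.toLp _) (hg.toLp g)
  simp only [MemLp.inner_toLp_toLp, Complex.conj_conj] at h
  have hf' : ∫ x, ‖f x‖ ^ 2 ∂μ = ‖hf.conj.toLp _‖ ^ 2 := by
    simp only [hf.conj.sq_norm_toLp, Complex.norm_conj]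
  rw [hf', ← hg.sq_norm_toLp, ← mul_pow]
  exact pow_le_pow_left₀ (norm_nonneg _) h 2

theorem ae_eq_zero_of_forall_integral_mul_eq_zero {ι : Type*} {u : ι → α → ℂ}
    (hu_compl : ∀ f, MemLp f 2 μ → (∀ i, ∫ x, conj (u i x) * f x ∂μ = 0) → f =ᵐ[μ] 0)
    {f : α → ℂ} (hf : MemLp f 2 μ) (h : ∀ i, ∫ x, u i x * f x ∂μ = 0) : f =ᵐ[μ] 0 := by
  have hconj : (fun x => conj (f x)) =ᵐ[μ] 0 := hu_compl _ hf.conj fun i => by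
    simp_rw [← map_mul, integral_conj, h i, map_zero]
  filter_upwards [hconj] with x hx
  simpa using hx

section Prod

variable {β : Type*} [MeasurableSpace β] {ν : Measure β}

theorem MemLp.mul_prod {f : α → ℂ} {g : β → ℂ} (hf : MemLp f 2 μ)
    (hg : MemLp g 2 ν) : MemLp (fun p : α × β => f p.1 * g p.2) 2 (μ.prod ν) := by
  refine (memLp_two_iff_integrable_sq_norm (hf.1.comp_fst.mul hg.1.comp_snd)).mpr ?_
  simpa only [Pi.mul_apply, norm_mul, mul_pow] using
    hf.integrable_sq_norm.mul_prod hg.integrable_sq_norm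

theorem MemLp.prod_right_ae [SFinite μ] [SFinite ν] {v : α × β → ℂ} (hv : MemLp v 2 (μ.prod ν)) :
    ∀ᵐ x ∂μ, MemLp (fun y => v (x, y)) 2 ν := by
  filter_upwards [hv.integrable_sq_norm.prod_right_ae, hv.1.prodMk_left] with x hint hmeas
  exact (memLp_two_iff_integrable_sq_norm hmeas).mpr hint

theorem MemLp.integral_mul_prod_right [SFinite μ] [SFinite ν] {g : β → ℂ} {v : α × β → ℂ}
    (hg : MemLp g 2 ν) (hv : MemLp v 2 (μ.prod ν)) :
    MemLp (fun x => ∫ y, g y * v (x, y) ∂ν) 2 μ := by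
  have hmeas : AEStronglyMeasurable (fun x => ∫ y, g y * v (x, y) ∂ν) μ :=
    (hg.1.comp_snd.mul hv.1).integral_prod_right'
  refine (memLp_two_iff_integrable_sq_norm hmeas).mpr <| Integrable.mono'
    (hv.integrable_sq_norm.integral_prod_left.const_mul (∫ y, ‖g y‖ ^ 2 ∂ν))
    (hmeas.norm.pow 2) ?_
  filter_upwards [hv.prod_right_ae] with x hx
  rw [Real.norm_of_nonneg (sq_nonneg _)]
  exact sq_norm_integral_mul_le hg hx

theorem integral_conj_tensor_mul_tensor [SFinite μ] [SFinite ν] (f f' : α → ℂ) (g g' : β → ℂ) :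
    ∫ p, conj (f p.1 * g p.2) * (f' p.1 * g' p.2) ∂(μ.prod ν) =
      (∫ x, conj (f x) * f' x ∂μ) * ∫ y, conj (g y) * g' y ∂ν := by
  simp_rw [map_mul, mul_mul_mul_comm]
  exact integral_prod_mul (fun x => conj (f x) * f' x) fun y => conj (g y) * g' y

variable {ι κ : Type*} {u : ι → α → ℂ} {w : κ → β → ℂ}

theorem orthonormal_toLp_tensor [SFinite μ] [SFinite ν] [DecidableEq ι] [DecidableEq κ]
    (hu : ∀ i, MemLp (u i) 2 μ) (hw : ∀ j, MemLp (w j) 2 ν)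
    (hu_orth : ∀ i i', ∫ x, conj (u i x) * u i' x ∂μ = if i = i' then 1 else 0)
    (hw_orth : ∀ j j', ∫ y, conj (w j y) * w j' y ∂ν = if j = j' then 1 else 0) :
    Orthonormal ℂ fun ij : ι × κ => ((hu ij.1).mul_prod (hw ij.2)).toLp _ := by
  rw [orthonormal_iff_ite]
  rintro ⟨i, j⟩ ⟨i', j'⟩
  rw [MemLp.inner_toLp_toLp, integral_conj_tensor_mul_tensor, hu_orth, hw_orth]
  by_cases hi : i = i' <;> by_cases hj : j = j' <;> simp [hi, hj]

theorem ae_eq_zero_of_integral_conj_tensor_mul_eq_zero [SFinite μ] [SFinite ν] [Countable κ]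
    (hu : ∀ i, MemLp (u i) 2 μ) (hw : ∀ j, MemLp (w j) 2 ν)
    (hu_compl : ∀ f, MemLp f 2 μ → (∀ i, ∫ x, conj (u i x) * f x ∂μ = 0) → f =ᵐ[μ] 0)
    (hw_compl : ∀ f, MemLp f 2 ν → (∀ j, ∫ y, conj (w j y) * f y ∂ν = 0) → f =ᵐ[ν] 0)
    {v : α × β → ℂ} (hv : MemLp v 2 (μ.prod ν))
    (h : ∀ i j, ∫ p, conj (u i p.1 * w j p.2) * v p ∂(μ.prod ν) = 0) : v =ᵐ[μ.prod ν] 0 := by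
  have hpartial : ∀ j, (fun x => ∫ y, conj (w j y) * v (x, y) ∂ν) =ᵐ[μ] 0 := fun j =>
    hu_compl _ ((hw j).conj.integral_mul_prod_right hv) fun i => by
      simp_rw [← integral_const_mul, ← mul_assoc, ← map_mul]
      rw [integral_integral (((hu i).mul_prod (hw j)).integrable_conj_mul hv)]
      exact h i j
  have hslice : ∀ᵐ x ∂μ, (fun y => v (x, y)) =ᵐ[ν] 0 := by
    filter_upwards [ae_all_iff.2 hpartial, hv.prod_right_ae] with x hx hxL2
    exact hw_compl _ hxL2 hx
  have hsq : ∫ p, ‖v p‖ ^ 2 ∂(μ.prod ν) = 0 := by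
    rw [← integral_integral (f := fun x y => ‖v (x, y)‖ ^ 2) hv.integrable_sq_norm]
    refine integral_eq_zero_of_ae ?_
    filter_upwards [hslice] with x hx
    refine integral_eq_zero_of_ae ?_
    filter_upwards [hx] with y hy
    simp [hy]
  filter_upwards [(integral_eq_zero_iff_of_nonneg (fun _ => sq_nonneg _)
    hv.integrable_sq_norm).1 hsq] with p hp
  simpa using hp

theorem hasSum_inner_smul_toLp_tensor [SFinite μ] [SFinite ν] [DecidableEq ι] [DecidableEq κ]
    [Countable κ] (hu : ∀ i, MemLp (u i) 2 μ) (hw : ∀ j, MemLp (w j) 2 ν)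
    (hu_orth : ∀ i i', ∫ x, conj (u i x) * u i' x ∂μ = if i = i' then 1 else 0)
    (hw_orth : ∀ j j', ∫ y, conj (w j y) * w j' y ∂ν = if j = j' then 1 else 0)
    (hu_compl : ∀ f, MemLp f 2 μ → (∀ i, ∫ x, conj (u i x) * f x ∂μ = 0) → f =ᵐ[μ] 0)
    (hw_compl : ∀ f, MemLp f 2 ν → (∀ j, ∫ y, conj (w j y) * f y ∂ν = 0) → f =ᵐ[ν] 0)
    (F : Lp ℂ 2 (μ.prod ν)) :
    HasSum (fun ij : ι × κ => ⟪((hu ij.1).mul_prod (hw ij.2)).toLp _, F⟫_ℂ •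
      ((hu ij.1).mul_prod (hw ij.2)).toLp _) F := by
  have htotal : (Submodule.span ℂ (Set.range fun ij : ι × κ =>
      ((hu ij.1).mul_prod (hw ij.2)).toLp _))ᗮ = ⊥ := by
    refine (Submodule.eq_bot_iff _).2 fun G hG => Lp.eq_zero_iff_ae_eq_zero.2 ?_
    refine ae_eq_zero_of_integral_conj_tensor_mul_eq_zero hu hw hu_compl hw_compl (Lp.memLp G)
      fun i j => ?_
    rw [← MemLp.inner_toLp_eq_integral ((hu i).mul_prod (hw j))]
    exact (Submodule.mem_orthogonal _ G).1 hG _ (Submodule.subset_span ⟨(i, j), rfl⟩)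
  have horth := orthonormal_toLp_tensor hu hw hu_orth hw_orth
  have h := (HilbertBasis.mkOfOrthogonalEqBot horth htotal).hasSum_repr F
  simpa only [HilbertBasis.repr_apply_apply, HilbertBasis.coe_mkOfOrthogonalEqBot] using h

end Prod

theorem integral_conj_tensor_mul_kernel [SFinite μ] {K : α → α → ℂ}
    (hK : MemLp (fun p : α × α => K p.1 p.2) 2 (μ.prod μ)) {f g : α → ℂ} (hf : MemLp f 2 μ)
    (hg : MemLp g 2 μ) {c : ℂ} (heig : ∀ x, ∫ y, K x y * g y ∂μ = c * g x) :
    ∫ p, conj (f p.1 * conj (g p.2)) * K p.1 p.2 ∂(μ.prod μ) = c * ∫ x, conj (f x) * g x ∂μ := by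
  rw [← integral_integral (f := fun x y => conj (f x * conj (g y)) * K x y)
    ((hf.mul_prod hg.conj).integrable_conj_mul hK), ← integral_const_mul]
  refine integral_congr_ae (Eventually.of_forall fun x => ?_)
  simp_rw [map_mul, Complex.conj_conj, mul_assoc, integral_const_mul, mul_comm (g _), heig]
  ring

theorem hasSum_eigenvalue_smul_toLp_tensor [SFinite μ] {ι : Type*} [Countable ι] [DecidableEq ι]
    {K : α → α → ℂ} (hK : MemLp (fun p : α × α => K p.1 p.2) 2 (μ.prod μ))
    {u : ι → α → ℂ} {c : ι → ℂ} (hu : ∀ i, MemLp (u i) 2 μ)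
    (hu_orth : ∀ i i', ∫ x, conj (u i x) * u i' x ∂μ = if i = i' then 1 else 0)
    (hu_compl : ∀ f, MemLp f 2 μ → (∀ i, ∫ x, conj (u i x) * f x ∂μ = 0) → f =ᵐ[μ] 0)
    (heig : ∀ i x, ∫ y, K x y * u i y ∂μ = c i * u i x) :
    HasSum (fun i => c i • ((hu i).mul_prod (hu i).conj).toLp _) (hK.toLp _) := by
  have hw_orth : ∀ i i', ∫ x, conj (conj (u i x)) * conj (u i' x) ∂μ = if i = i' then 1 else 0 :=
    fun i i' => by simp_rw [← map_mul, integral_conj, hu_orth, apply_ite conj, map_one, map_zero]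
  have hw_compl (f : α → ℂ) (hf : MemLp f 2 μ)
      (h : ∀ i, ∫ x, conj (conj (u i x)) * f x ∂μ = 0) : f =ᵐ[μ] 0 :=
    ae_eq_zero_of_forall_integral_mul_eq_zero hu_compl hf
      (by simpa only [Complex.conj_conj] using h)
  have hexp := hasSum_inner_smul_toLp_tensor hu (fun i => (hu i).conj) hu_orth hw_orth hu_compl
    hw_compl (hK.toLp _)
  simp_rw [MemLp.inner_toLp_toLp, integral_conj_tensor_mul_kernel hK (hu _) (hu _) (heig _),
    hu_orth, mul_ite, mul_one, mul_zero, ite_smul, zero_smul] at hexp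
  have hdiag : Function.Injective fun i : ι => (i, i) := fun i j h => congrArg Prod.fst h
  refine ((hdiag.hasSum_iff ?_).2 hexp).congr_fun fun i => ?_
  · rintro ⟨i, j⟩ hij
    simp only [Set.mem_range, Prod.mk.injEq, exists_eq_left] at hij
    simp only [hij, if_false]
  · simp only [Function.comp_apply, if_true]

theorem MemLp.toLp_finsetSum {E : Type*} [NormedAddCommGroup E] {p : ℝ≥0∞} {ι : Type*}
    (s : Finset ι) {f : ι → α → E} (hf : ∀ i, MemLp (f i) p μ) :
    (memLp_finsetSum s fun i _ => hf i).toLp (fun x => ∑ i ∈ s, f i x) =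
      ∑ i ∈ s, (hf i).toLp (f i) := by
  classical
  induction s using Finset.induction_on with
  | empty => simp only [Finset.sum_empty]; exact MemLp.toLp_zero _
  | insert i s hi ih =>
    simp only [Finset.sum_insert hi, ← ih]
    exact MemLp.toLp_add (hf i) _

theorem tendsto_integral_integral_sq_norm_sub [SFinite μ] {β : Type*} [MeasurableSpace β]
    {ν : Measure β} [SFinite ν] {ι : Type*} {l : Filter ι} {F : ι → α × β → ℂ} {G : α × β → ℂ}
    (hF : ∀ n, MemLp (F n) 2 (μ.prod ν)) (hG : MemLp G 2 (μ.prod ν))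
    (h : Tendsto (fun n => (hF n).toLp (F n)) l (𝓝 (hG.toLp G))) :
    Tendsto (fun n => ∫ x, ∫ y, ‖G (x, y) - F n (x, y)‖ ^ 2 ∂ν ∂μ) l (𝓝 0) := by
  have hnorm (n : ι) : ∫ x, ∫ y, ‖G (x, y) - F n (x, y)‖ ^ 2 ∂ν ∂μ =
      ‖hG.toLp G - (hF n).toLp (F n)‖ ^ 2 := by
    rw [← MemLp.toLp_sub, MemLp.sq_norm_toLp,
      integral_integral (f := fun x y => ‖G (x, y) - F n (x, y)‖ ^ 2)
        (hG.sub (hF n)).integrable_sq_norm]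
    rfl
  simp_rw [hnorm]
  simpa using ((tendsto_const_nhds (x := hG.toLp G)).sub h).norm.pow 2

end MeasureTheory

theorem HasSum.tendsto_sum_range_inl_add_inr {E : Type*} [AddCommGroup E] [UniformSpace E]
    [IsUniformAddGroup E] [CompleteSpace E] [T2Space E] {g : ℕ ⊕ ℕ → E} {a : E} (h : HasSum g a) :
    Tendsto (fun N => ∑ k ∈ Finset.range N, (g (.inl k) + g (.inr k))) atTop (𝓝 a) := by
  have hl := (h.summable.comp_injective Sum.inl_injective).hasSum
  have hr := (h.summable.comp_injective Sum.inr_injective).hasSum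
  rw [← (hl.sum hr).unique h]
  exact (hl.add hr).tendsto_sum_nat

section WithConj

variable {M : Type*} [MeasurableSpace M] {μ : Measure M} {T : ℕ → M → ℂ}

def withConj (T : ℕ → M → ℂ) : ℕ ⊕ ℕ → M → ℂ :=
  Sum.elim T fun k x => conj (T k x)

theorem memLp_withConj (hT : ∀ k, MemLp (T k) 2 μ) : ∀ a, MemLp (withConj T a) 2 μ
  | .inl k => hT k
  | .inr k => (hT k).conj

theorem integral_conj_withConj_mul_withConj
    (horth : ∀ j k, ∫ x, conj (T j x) * T k x ∂μ = if j = k then 1 else 0)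
    (horth2 : ∀ j k, ∫ x, T j x * T k x ∂μ = 0) (a b : ℕ ⊕ ℕ) :
    ∫ x, conj (withConj T a x) * withConj T b x ∂μ = if a = b then 1 else 0 := by
  rcases a with j | j <;> rcases b with k | k <;>
    simp only [withConj, Sum.elim_inl, Sum.elim_inr, Complex.conj_conj, Sum.inl.injEq,
      Sum.inr.injEq, reduceCtorEq, if_false]
  · exact horth j k
  · simpa only [← integral_conj, map_mul, map_zero] using congrArg conj (horth2 j k)
  · exact horth2 j k
  · simpa only [← integral_conj, map_mul, Complex.conj_conj, apply_ite conj, map_one, map_zero]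
      using congrArg conj (horth j k)

theorem ae_eq_zero_of_integral_conj_withConj_mul_eq_zero
    (hcomplete : ∀ f : M → ℂ, MemLp f 2 μ → (∀ k, ∫ x, conj (T k x) * f x ∂μ = 0) →
      (∀ k, ∫ x, T k x * f x ∂μ = 0) → f =ᵐ[μ] 0)
    (f : M → ℂ) (hf : MemLp f 2 μ) (h : ∀ a, ∫ x, conj (withConj T a x) * f x ∂μ = 0) :
    f =ᵐ[μ] 0 :=
  hcomplete f hf (fun k => h (.inl k)) fun k => by
    simpa only [withConj, Sum.elim_inr, Complex.conj_conj] using h (.inr k)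

theorem integral_kernel_mul_withConj {K : M → M → ℂ} {lam : ℕ → ℝ}
    (hImag : ∀ x y, conj (K x y) = -K x y)
    (heig : ∀ k x, ∫ y, K x y * T k y ∂μ = (lam k : ℂ) * T k x) (a : ℕ ⊕ ℕ) (x : M) :
    ∫ y, K x y * withConj T a y ∂μ =
      Sum.elim (fun k => (lam k : ℂ)) (fun k => -(lam k : ℂ)) a * withConj T a x := by
  cases a with
  | inl k => exact heig k x
  | inr k =>
    have hconj (y : M) : K x y * conj (T k y) = -conj (K x y * T k y) := by
      rw [map_mul, hImag, neg_mul, neg_neg]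
    simp_rw [withConj, Sum.elim_inr, hconj, integral_neg, integral_conj, heig]
    rw [map_mul, Complex.conj_ofReal, neg_mul]

end WithConj

theorem kernel_positive_negative_decomposition_general
    {M : Type*} [MeasurableSpace M] (μ : Measure M) [SigmaFinite μ]
    (K : M → M → ℂ) (T : ℕ → M → ℂ) (lam : ℕ → ℝ)
    (hK2 : MemLp (fun p : M × M => K p.1 p.2) 2 (μ.prod μ))
    (hImag : ∀ x y, (starRingEnd ℂ) (K x y) = -K x y)
    (hTL2 : ∀ k, MemLp (T k) 2 μ)
    (horth : ∀ j k, ∫ x, (starRingEnd ℂ) (T j x) * T k x ∂μ = if j = k then 1 else 0)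
    (horth2 : ∀ j k, ∫ x, T j x * T k x ∂μ = 0)
    (heig : ∀ k x, ∫ y, K x y * T k y ∂μ = (lam k : ℂ) * T k x)
    (hcomplete : ∀ f : M → ℂ, MemLp f 2 μ →
      (∀ k, ∫ x, (starRingEnd ℂ) (T k x) * f x ∂μ = 0) →
      (∀ k, ∫ x, T k x * f x ∂μ = 0) → f =ᵐ[μ] 0) :
    Filter.Tendsto (fun N : ℕ => ∫ x, ∫ y,
        ‖K x y - ∑ k ∈ Finset.range N, (lam k : ℂ) *
          (T k x * (starRingEnd ℂ) (T k y) - (starRingEnd ℂ) (T k x) * T k y)‖ ^ 2 ∂μ ∂μ)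
      Filter.atTop (nhds 0) := by
  have hu := memLp_withConj hTL2
  have hexp := hasSum_eigenvalue_smul_toLp_tensor hK2 hu
    (integral_conj_withConj_mul_withConj horth horth2)
    (ae_eq_zero_of_integral_conj_withConj_mul_eq_zero hcomplete)
    (integral_kernel_mul_withConj hImag heig)
  have hterm (k : ℕ) : MemLp (fun p : M × M => (lam k : ℂ) *
      (T k p.1 * conj (T k p.2) - conj (T k p.1) * T k p.2)) 2 (μ.prod μ) :=
    (((hTL2 k).mul_prod (hTL2 k).conj).sub ((hTL2 k).conj.mul_prod (hTL2 k))).const_mul _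
  refine tendsto_integral_integral_sq_norm_sub
    (F := fun N p => ∑ k ∈ Finset.range N, (lam k : ℂ) *
      (T k p.1 * conj (T k p.2) - conj (T k p.1) * T k p.2)) (G := fun p => K p.1 p.2)
    (fun N => memLp_finsetSum (Finset.range N) fun k _ => hterm k) hK2 ?_
  refine hexp.tendsto_sum_range_inl_add_inr.congr fun N => ?_
  rw [MemLp.toLp_finsetSum _ hterm]
  refine Finset.sum_congr rfl fun k _ => ?_
  rw [← MemLp.toLp_const_smul, ← MemLp.toLp_const_smul, ← MemLp.toLp_add]
  refine MemLp.toLp_congr _ _ (Eventually.of_forall fun p => ?_)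
  simp only [withConj, Sum.elim_inl, Sum.elim_inr, Complex.conj_conj, Pi.add_apply,
    Pi.smul_apply, smul_eq_mul]
  ring

/-- A Hermitian Hilbert–Schmidt kernel `K = i∆` with purely imaginary kernel, whose
eigenfunctions `T k` (eigenvalue `λ k > 0`) together with their conjugates (eigenvalue `-λ k`)
form a complete orthonormal system, decomposes as
`K x y = ∑ₖ λ k (T k x * conj (T k y) - conj (T k x) * T k y)` with convergence in `L²(M×M)`. -/
theorem kernel_positive_negative_decomposition
    {M : Type*} [MeasurableSpace M] (μ : Measure M) [SigmaFinite μ]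
    (K : M → M → ℂ) (T : ℕ → M → ℂ) (lam : ℕ → ℝ)
    (hK2 : MemLp (fun p : M × M => K p.1 p.2) 2 (μ.prod μ))
    (hHerm : ∀ x y, (starRingEnd ℂ) (K y x) = K x y)
    (hImag : ∀ x y, (starRingEnd ℂ) (K x y) = -K x y)
    (hTL2 : ∀ k, MemLp (T k) 2 μ)
    (hpos : ∀ k, 0 < lam k)
    (horth : ∀ j k, ∫ x, (starRingEnd ℂ) (T j x) * T k x ∂μ = if j = k then 1 else 0)
    (horth2 : ∀ j k, ∫ x, T j x * T k x ∂μ = 0)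
    (heig : ∀ k x, ∫ y, K x y * T k y ∂μ = (lam k : ℂ) * T k x)
    (hcomplete : ∀ f : M → ℂ, MemLp f 2 μ →
      (∀ k, ∫ x, (starRingEnd ℂ) (T k x) * f x ∂μ = 0) →
      (∀ k, ∫ x, T k x * f x ∂μ = 0) → f =ᵐ[μ] 0) :
    Filter.Tendsto (fun N : ℕ => ∫ x, ∫ y,
        ‖K x y - ∑ k ∈ Finset.range N, (lam k : ℂ) *
          (T k x * (starRingEnd ℂ) (T k y) - (starRingEnd ℂ) (T k x) * T k y)‖ ^ 2 ∂μ ∂μ)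
      Filter.atTop (nhds 0) :=
  kernel_positive_negative_decomposition_general μ K T lam hK2 hImag hTL2 horth horth2 heig
    hcomplete
end

section
/- Suppose complex mode functions $\{u_n\}$ form an orthonormal basis in the Klein–Gordon sense: $(u_n,u_m)_{KG} = \delta_{nm}$, $(\bar u_n,\bar u_m)_{KG} = -\delta_{nm}$, $(u_n,\bar u_m)_{KG} = 0$, and additionally satisfy the $L^2$ conditions $\langle u_n,u_m\rangle = \langle u_n,u_n\rangle\delta_{nm}$ with $\langle u_n,u_n\rangle > 0$ and $\langle u_n,\bar u_m\rangle = 0$. If $\{g_n\}$ is another family satisfying the same sets of conditions, and $g_n = \sum_k \alpha_{nk} u_k + \beta_{nk}\bar u_k$, then $\beta_{nk} = 0$ for all $n,k$ and the matrix $(\alpha_{nk})$ is unitary: $\sum_k \overline{\alpha_{nk}}\alpha_{mk} = \delta_{nm}$. -/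
noncomputable section

open Finset Matrix

local notation "𝕔" => starRingEnd ℂ

/-- Uniqueness of the S-J modes: if `{uₙ}` and `{gₙ}` both form Klein–Gordon orthonormal
bases which are also `L²`-orthogonal to each other and to their conjugates
(`⟨uₙ,uₘ⟩ = ⟨uₙ,uₙ⟩δₙₘ > 0`, `⟨uₙ,ūₘ⟩ = 0`, and likewise for `g`), and
`gₙ = ∑ₖ αₙₖ uₖ + βₙₖ ūₖ`, then `β = 0` and `α` is unitary. -/
theorem sj_mode_uniqueness {ι : Type*} [Fintype ι] [DecidableEq ι]
    {V : Type*} [AddCommGroup V] [Module ℂ V]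
    (J : V → V)
    (hJadd : ∀ v w, J (v + w) = J v + J w)
    (hJsmul : ∀ (a : ℂ) (v : V), J (a • v) = (starRingEnd ℂ) a • J v)
    (hJJ : ∀ v, J (J v) = v)
    (KG ip : V → V → ℂ)
    (hKGadd : ∀ f g h, KG f (g + h) = KG f g + KG f h)
    (hKGsmul : ∀ (a : ℂ) (f g : V), KG f (a • g) = a * KG f g)
    (hKGherm : ∀ f g, (starRingEnd ℂ) (KG f g) = KG g f)
    (hipadd : ∀ f g h, ip f (g + h) = ip f g + ip f h)
    (hipsmul : ∀ (a : ℂ) (f g : V), ip f (a • g) = a * ip f g)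
    (hipherm : ∀ f g, (starRingEnd ℂ) (ip f g) = ip g f)
    (hipJ : ∀ f g, ip (J f) g = ip (J g) f)
    (u g : ι → V) (α β : ι → ι → ℂ)
    (hu1 : ∀ n m, KG (u n) (u m) = if n = m then 1 else 0)
    (hu2 : ∀ n m, KG (J (u n)) (J (u m)) = -(if n = m then 1 else 0))
    (hu3 : ∀ n m, KG (u n) (J (u m)) = 0)
    (hg1 : ∀ n m, KG (g n) (g m) = if n = m then 1 else 0)
    (hg2 : ∀ n m, KG (J (g n)) (J (g m)) = -(if n = m then 1 else 0))
    (hg3 : ∀ n m, KG (g n) (J (g m)) = 0)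
    (hu4 : ∀ n m, n ≠ m → ip (u n) (u m) = 0)
    (hu5 : ∀ n, 0 < (ip (u n) (u n)).re)
    (hu6 : ∀ n m, ip (u n) (J (u m)) = 0)
    (hg4 : ∀ n m, n ≠ m → ip (g n) (g m) = 0)
    (hg5 : ∀ n, 0 < (ip (g n) (g n)).re)
    (hg6 : ∀ n m, ip (g n) (J (g m)) = 0)
    (hspan : Submodule.span ℂ (Set.range u ∪ Set.range fun k => J (u k)) = ⊤)
    (hexp : ∀ n, g n = ∑ k, (α n k • u k + β n k • J (u k))) :
    (∀ n k, β n k = 0) ∧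
    (∀ n m, ∑ k, (starRingEnd ℂ) (α n k) * α m k = if n = m then 1 else 0) := by
  classical
  set cc : ι → ℂ := fun k => ip (u k) (u k) with hcc
  set dd : ι → ℂ := fun n => ip (g n) (g n) with hdd
  -- sum lemmas
  have hKGsum : ∀ (f : V) (s : ι → V), KG f (∑ k, s k) = ∑ k, KG f (s k) := by
    intro f s
    exact map_sum (AddMonoidHom.mk' (KG f) (hKGadd f)) s Finset.univ
  have hipsum : ∀ (f : V) (s : ι → V), ip f (∑ k, s k) = ∑ k, ip f (s k) := by
    intro f s
    exact map_sum (AddMonoidHom.mk' (ip f) (hipadd f)) s Finset.univ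
  have hJsum : ∀ (s : ι → V), J (∑ k, s k) = ∑ k, J (s k) := by
    intro s
    exact map_sum (AddMonoidHom.mk' J hJadd) s Finset.univ
  -- base table
  have hu3' : ∀ k l, KG (J (u k)) (u l) = 0 := by
    intro k l; rw [← hKGherm (u l) (J (u k)), hu3]; simp
  have hu6' : ∀ k l, ip (J (u k)) (u l) = 0 := by
    intro k l; rw [← hipherm (u l) (J (u k)), hu6]; simp
  have hu7 : ∀ k l, ip (J (u k)) (J (u l)) = if k = l then cc k else 0 := by
    intro k l
    rw [hipJ (u k) (J (u l)), hJJ]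
    by_cases h : k = l
    · subst h; simp [hcc]
    · simp [h, hu4 l k (Ne.symm h)]
  have hu4' : ∀ k l, ip (u k) (u l) = if k = l then cc k else 0 := by
    intro k l
    by_cases h : k = l
    · subst h; simp [hcc]
    · simp [h, hu4 k l h]
  have hccreal : ∀ k, 𝕔 (cc k) = cc k := fun k => hipherm (u k) (u k)
  -- coefficients of g against basis
  have hKGug : ∀ n l, KG (u l) (g n) = α n l := by
    intro n l
    rw [hexp n, hKGsum]
    have : ∀ k, KG (u l) (α n k • u k + β n k • J (u k))
        = α n k * (if l = k then 1 else 0) := by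
      intro k
      rw [hKGadd, hKGsmul, hKGsmul, hu1, hu3]; ring
    rw [Finset.sum_congr rfl (fun k _ => this k)]
    simp
  have hKGJug : ∀ n l, KG (J (u l)) (g n) = -(β n l) := by
    intro n l
    rw [hexp n, hKGsum]
    have : ∀ k, KG (J (u l)) (α n k • u k + β n k • J (u k))
        = -(β n k * (if l = k then 1 else 0)) := by
      intro k
      rw [hKGadd, hKGsmul, hKGsmul, hu2, hu3']; ring
    rw [Finset.sum_congr rfl (fun k _ => this k)]
    simp
  have hKGgu : ∀ n l, KG (g n) (u l) = 𝕔 (α n l) := by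
    intro n l; rw [← hKGherm (u l) (g n), hKGug]
  have hKGgJu : ∀ n l, KG (g n) (J (u l)) = -(𝕔 (β n l)) := by
    intro n l; rw [← hKGherm (J (u l)) (g n), hKGJug]; simp
  have hipug : ∀ n l, ip (u l) (g n) = α n l * cc l := by
    intro n l
    rw [hexp n, hipsum]
    have : ∀ k, ip (u l) (α n k • u k + β n k • J (u k))
        = α n k * (if l = k then cc l else 0) := by
      intro k
      rw [hipadd, hipsmul, hipsmul, hu4' l k, hu6]; ring
    rw [Finset.sum_congr rfl (fun k _ => this k)]
    simp
  have hipJug : ∀ n l, ip (J (u l)) (g n) = β n l * cc l := by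
    intro n l
    rw [hexp n, hipsum]
    have : ∀ k, ip (J (u l)) (α n k • u k + β n k • J (u k))
        = β n k * (if l = k then cc l else 0) := by
      intro k
      rw [hipadd, hipsmul, hipsmul, hu7 l k, hu6']; ring
    rw [Finset.sum_congr rfl (fun k _ => this k)]
    simp
  have hipgu : ∀ n l, ip (g n) (u l) = 𝕔 (α n l) * cc l := by
    intro n l
    rw [← hipherm (u l) (g n), hipug]
    rw [_root_.map_mul, hccreal]
  have hipgJu : ∀ n l, ip (g n) (J (u l)) = 𝕔 (β n l) * cc l := by
    intro n l
    rw [← hipherm (J (u l)) (g n), hipJug]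
    rw [_root_.map_mul, hccreal]
  have hJg : ∀ m, J (g m) = ∑ l, (𝕔 (β m l) • u l + 𝕔 (α m l) • J (u l)) := by
    intro m
    rw [hexp m, hJsum]
    refine Finset.sum_congr rfl fun l _ => ?_
    rw [hJadd, hJsmul, hJsmul, hJJ, add_comm]
  -- E-identities
  have hE1 : ∀ n m, ∑ l, (α m l * 𝕔 (α n l) - β m l * 𝕔 (β n l))
      = if n = m then 1 else 0 := by
    intro n m
    have h := hg1 n m
    rw [hexp m, hKGsum] at h
    rw [← h]
    refine Finset.sum_congr rfl fun l _ => ?_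
    rw [hKGadd, hKGsmul, hKGsmul, hKGgu, hKGgJu]; ring
  have hE2 : ∀ n m, ∑ l, (𝕔 (β m l) * 𝕔 (α n l) - 𝕔 (α m l) * 𝕔 (β n l))
      = 0 := by
    intro n m
    have h := hg3 n m
    rw [hJg m, hKGsum] at h
    rw [← h]
    refine Finset.sum_congr rfl fun l _ => ?_
    rw [hKGadd, hKGsmul, hKGsmul, hKGgu, hKGgJu]; ring
  have hE2c : ∀ n m, ∑ l, (β m l * α n l - α m l * β n l) = 0 := by
    intro n m
    have h := congrArg 𝕔 (hE2 n m)
    rw [map_sum, _root_.map_zero] at h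
    rw [← h]
    refine Finset.sum_congr rfl fun l _ => ?_
    simp [_root_.map_mul]
  have hE3 : ∀ n m, ∑ l, (α m l * 𝕔 (α n l) + β m l * 𝕔 (β n l)) * cc l
      = if n = m then dd n else 0 := by
    intro n m
    have h : ip (g n) (g m) = if n = m then dd n else 0 := by
      by_cases hnm : n = m
      · subst hnm; simp [hdd]
      · simp [hnm, hg4 n m hnm]
    rw [hexp m, hipsum] at h
    rw [← h]
    refine Finset.sum_congr rfl fun l _ => ?_
    rw [hipadd, hipsmul, hipsmul, hipgu, hipgJu]; ring
  have hE4 : ∀ n m, ∑ l, (𝕔 (β m l) * 𝕔 (α n l) + 𝕔 (α m l) * 𝕔 (β n l)) * cc l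
      = 0 := by
    intro n m
    have h := hg6 n m
    rw [hJg m, hipsum] at h
    rw [← h]
    refine Finset.sum_congr rfl fun l _ => ?_
    rw [hipadd, hipsmul, hipsmul, hipgu, hipgJu]; ring
  have hE4c : ∀ n m, ∑ l, (β m l * α n l + α m l * β n l) * cc l = 0 := by
    intro n m
    have h := congrArg 𝕔 (hE4 n m)
    rw [map_sum, _root_.map_zero] at h
    rw [← h]
    refine Finset.sum_congr rfl fun l _ => ?_
    simp [_root_.map_mul, hccreal]
  -- block matrix argument
  set A : Matrix ι ι ℂ := Matrix.of α with hA
  set B : Matrix ι ι ℂ := Matrix.of β with hB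
  have hifswap : ∀ n m : ι, (if n = m then (1:ℂ) else 0) = if m = n then 1 else 0 := by
    intro n m; by_cases h : n = m
    · subst h; simp
    · simp [h, Ne.symm h]
  have hb11 : A * Aᴴ + B * (-Bᴴ) = (1 : Matrix ι ι ℂ) := by
    ext n m
    have h := hE1 m n
    simp only [Matrix.add_apply, Matrix.mul_apply, Matrix.neg_apply,
      Matrix.conjTranspose_apply, Matrix.one_apply, Matrix.of_apply, hA, hB,
      Complex.star_def, ← Finset.sum_add_distrib]
    rw [hifswap, ← h]
    exact Finset.sum_congr rfl fun k _ => by ring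
  have hb12 : A * (-Bᵀ) + B * Aᵀ = (0 : Matrix ι ι ℂ) := by
    ext n m
    have h := hE2c m n
    simp only [Matrix.add_apply, Matrix.mul_apply, Matrix.neg_apply,
      Matrix.transpose_apply, Matrix.zero_apply, Matrix.of_apply, hA, hB,
      ← Finset.sum_add_distrib]
    rw [← h]
    exact Finset.sum_congr rfl fun k _ => by ring
  have hb21 : (B.map 𝕔) * Aᴴ + (A.map 𝕔) * (-Bᴴ) = (0 : Matrix ι ι ℂ) := by
    ext n m
    have h := hE2 m n
    simp only [Matrix.add_apply, Matrix.mul_apply, Matrix.neg_apply,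
      Matrix.conjTranspose_apply, Matrix.map_apply, Matrix.zero_apply,
      Matrix.of_apply, hA, hB, Complex.star_def, ← Finset.sum_add_distrib]
    rw [← h]
    exact Finset.sum_congr rfl fun k _ => by ring
  have hb22 : (B.map 𝕔) * (-Bᵀ) + (A.map 𝕔) * Aᵀ = (1 : Matrix ι ι ℂ) := by
    ext n m
    have h := hE1 n m
    simp only [Matrix.add_apply, Matrix.mul_apply, Matrix.neg_apply,
      Matrix.conjTranspose_apply, Matrix.transpose_apply, Matrix.map_apply,
      Matrix.one_apply, Matrix.of_apply, hA, hB, Complex.star_def,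
      ← Finset.sum_add_distrib]
    rw [← h]
    exact Finset.sum_congr rfl fun k _ => by ring
  have hST : Matrix.fromBlocks A B (B.map 𝕔) (A.map 𝕔)
      * Matrix.fromBlocks Aᴴ (-Bᵀ) (-Bᴴ) Aᵀ = 1 := by
    rw [Matrix.fromBlocks_multiply, hb11, hb12, hb21, hb22, Matrix.fromBlocks_one]
  have hTS := mul_eq_one_comm.mp hST
  rw [Matrix.fromBlocks_multiply] at hTS
  have hF3 : ∀ k l, ∑ n, (𝕔 (α n k) * α n l - β n k * 𝕔 (β n l))
      = if k = l then 1 else 0 := by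
    intro k l
    have h := congrFun (congrFun hTS (Sum.inl k)) (Sum.inl l)
    simp only [Matrix.fromBlocks_apply₁₁, Matrix.one_apply, Sum.inl.injEq] at h
    simp only [Matrix.add_apply, Matrix.mul_apply, Matrix.neg_apply,
      Matrix.conjTranspose_apply, Matrix.transpose_apply, Matrix.map_apply,
      Matrix.one_apply, Matrix.of_apply, hA, hB, Complex.star_def,
      ← Finset.sum_add_distrib] at h
    rw [← h]
    exact Finset.sum_congr rfl fun n _ => by ring
  have hF4 : ∀ k l, ∑ n, (𝕔 (α n k) * β n l - β n k * 𝕔 (α n l)) = 0 := by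
    intro k l
    have h := congrFun (congrFun hTS (Sum.inl k)) (Sum.inr l)
    simp only [Matrix.fromBlocks_apply₁₂] at h
    rw [Matrix.one_apply_ne (by simp)] at h
    simp only [Matrix.add_apply, Matrix.mul_apply, Matrix.neg_apply,
      Matrix.conjTranspose_apply, Matrix.transpose_apply, Matrix.map_apply,
      Matrix.zero_apply, Matrix.of_apply, hA, hB, Complex.star_def,
      ← Finset.sum_add_distrib] at h
    rw [← h]
    exact Finset.sum_congr rfl fun n _ => by ring
  -- kill beta
  have hbeta : ∀ m l, β m l = 0 := by
    intro m l
    set p : ι → ℂ := fun k => α m k * (dd m - cc k) with hp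
    set q : ι → ℂ := fun k => β m k * (dd m + cc k) with hq
    have hO1 : ∀ n, ∑ k, (𝕔 (α n k) * p k - 𝕔 (β n k) * q k) = 0 := by
      intro n
      have h1 := hE1 n m
      have h3 := hE3 n m
      have : ∑ k, (𝕔 (α n k) * p k - 𝕔 (β n k) * q k)
          = dd m * (∑ k, (α m k * 𝕔 (α n k) - β m k * 𝕔 (β n k)))
            - ∑ k, (α m k * 𝕔 (α n k) + β m k * 𝕔 (β n k)) * cc k := by
        rw [Finset.mul_sum, ← Finset.sum_sub_distrib]
        refine Finset.sum_congr rfl fun k _ => ?_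
        simp only [hp, hq]; ring
      rw [this, h1, h3]
      by_cases hnm : n = m
      · subst hnm; simp
      · simp [hnm]
    have hO2 : ∀ n, ∑ k, (β n k * p k - α n k * q k) = 0 := by
      intro n
      have h2 := hE2c n m
      have h4 := hE4c n m
      have : ∑ k, (β n k * p k - α n k * q k)
          = -(dd m * (∑ k, (β m k * α n k - α m k * β n k)))
            - ∑ k, (β m k * α n k + α m k * β n k) * cc k := by
        rw [Finset.mul_sum, ← Finset.sum_neg_distrib, ← Finset.sum_sub_distrib]
        refine Finset.sum_congr rfl fun k _ => ?_
        simp only [hp, hq]; ring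
      rw [this, h2, h4]; ring
    have hkey : (0 : ℂ) = -q l := by
      have hA' : ∑ n, ∑ k, (𝕔 (α n l) * (β n k * p k - α n k * q k)
          - β n l * (𝕔 (α n k) * p k - 𝕔 (β n k) * q k)) = 0 := by
        refine Finset.sum_eq_zero fun n _ => ?_
        have : ∑ k, (𝕔 (α n l) * (β n k * p k - α n k * q k)
            - β n l * (𝕔 (α n k) * p k - 𝕔 (β n k) * q k))
            = 𝕔 (α n l) * (∑ k, (β n k * p k - α n k * q k))
              - β n l * (∑ k, (𝕔 (α n k) * p k - 𝕔 (β n k) * q k)) := by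
          rw [Finset.mul_sum, Finset.mul_sum, ← Finset.sum_sub_distrib]
        rw [this, hO1 n, hO2 n]; ring
      have hB' : ∑ n, ∑ k, (𝕔 (α n l) * (β n k * p k - α n k * q k)
          - β n l * (𝕔 (α n k) * p k - 𝕔 (β n k) * q k)) = -q l := by
        rw [Finset.sum_comm]
        have step : ∀ k, ∑ n, (𝕔 (α n l) * (β n k * p k - α n k * q k)
            - β n l * (𝕔 (α n k) * p k - 𝕔 (β n k) * q k))
            = p k * (∑ n, (𝕔 (α n l) * β n k - β n l * 𝕔 (α n k)))
              - q k * (∑ n, (𝕔 (α n l) * α n k - β n l * 𝕔 (β n k))) := by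
          intro k
          rw [Finset.mul_sum, Finset.mul_sum, ← Finset.sum_sub_distrib]
          refine Finset.sum_congr rfl fun n _ => ?_
          ring
        rw [Finset.sum_congr rfl (fun k _ => step k)]
        have step2 : ∀ k, p k * (∑ n, (𝕔 (α n l) * β n k - β n l * 𝕔 (α n k)))
            - q k * (∑ n, (𝕔 (α n l) * α n k - β n l * 𝕔 (β n k)))
            = -(q k * (if l = k then 1 else 0)) := by
          intro k
          rw [hF4 l k, hF3 l k]; ring
        rw [Finset.sum_congr rfl (fun k _ => step2 k)]
        simp
      rw [← hA', hB']
    have hq0 : q l = 0 := by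
      have := hkey.symm
      simpa using this
    have hne : dd m + cc l ≠ 0 := by
      intro h
      have h1 : (dd m + cc l).re = 0 := by rw [h]; simp
      have h2 : 0 < (dd m + cc l).re := by
        rw [Complex.add_re]
        exact add_pos (hg5 m) (hu5 l)
      linarith
    have := hq0
    rw [hq] at this
    simp only at this
    rcases mul_eq_zero.mp this with h | h
    · exact h
    · exact absurd h hne
  refine ⟨hbeta, fun n m => ?_⟩
  have h1 := hE1 n m
  have : ∑ l, (α m l * 𝕔 (α n l) - β m l * 𝕔 (β n l))
      = ∑ k, 𝕔 (α n k) * α m k := by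
    refine Finset.sum_congr rfl fun k _ => ?_
    rw [hbeta m k]; ring
  rw [this] at h1
  exact h1
end
end

section
/- Given a sequence of complex numbers $\lambda_n > 0$ and inner products satisfying $\langle u_k, u_m\rangle = \langle u_k,u_k\rangle\delta_{km}$ and $\langle u_k,\bar u_m\rangle = \langle u_k,\bar u_{-k}\rangle\delta_{k,-m}$, the coefficients $\alpha_{nk} = \big[\frac{\lambda_{-n} + \langle u_n,u_n\rangle}{\lambda_n(\lambda_n+\lambda_{-n})}\big]^{1/2}\delta_{nk}$ and $\beta_{nk} = -\big[\frac{\langle u_n,u_n\rangle - \lambda_n}{\lambda_n(\lambda_n+\lambda_{-n})}\big]^{1/2} e^{-i\arg\langle u_n,\bar u_{-n}\rangle}\delta_{n,-k}$, with $2\lambda_n = \langle u_n,u_n\rangle - \langle u_{-n},u_{-n}\rangle + \big[(\langle u_n,u_n\rangle + \langle u_{-n},u_{-n}\rangle)^2 - 4|\langle u_n,\bar u_{-n}\rangle|^2\big]^{1/2}$, satisfy the eigenvalue equations $\alpha_{nk} = \frac{1}{\lambda_n}\sum_m \alpha_{nm}\langle u_k,u_m\rangle + \beta_{nm}\langle u_k,\bar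 u_m\rangle$ and $\beta_{nk} = \frac{-1}{\lambda_n}\sum_m \alpha_{nm}\langle\bar u_k,u_m\rangle + \beta_{nm}\langle\bar u_k,\bar u_m\rangle$. -/
/-!
For fixed `n` only the modes `n` and `neg n` couple, and the eigen equations reduce to those of
the `2 × 2` matrix `[[p, z], [-conj z, -q]]` with `p = a n`, `q = a (neg n)`, `z = c n`.
Its eigenvalues are `λₙ` and `-λ_{neg n}`, so `λₙ` satisfies the characteristic equation
`(p - λₙ)(λₙ + q) = |z|²`; this is exactly what makes the square-root normalisations of
`αₙₙ` and `βₙ,neg n` proportional in the right ratio, once the phase `e^{-i arg z}` turns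
`z` and `conj z` into `|z|`.
-/

section

open Complex ComplexConjugate

theorem Complex.mul_exp_neg_arg_mul_I (z : ℂ) : z * exp (-arg z * I) = ‖z‖ := by
  nth_rewrite 1 [← norm_mul_exp_arg_mul_I z]
  rw [mul_assoc, ← exp_add, neg_mul, add_neg_cancel, exp_zero, mul_one]

theorem Complex.conj_eq_norm_mul_exp_neg_arg_mul_I (z : ℂ) :
    conj z = ‖z‖ * exp (-arg z * I) := by
  nth_rewrite 1 [← norm_mul_exp_arg_mul_I z]
  rw [map_mul, ← exp_conj, map_mul, conj_ofReal, conj_ofReal, conj_I, mul_neg, neg_mul]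

theorem Real.mul_sqrt_div_eq_of_mul_eq_sq {x y r : ℝ} (D : ℝ) (hx : 0 ≤ x) (hr : 0 ≤ r)
    (h : x * y = r ^ 2) : x * √(y / D) = r * √(x / D) := by
  rw [← Real.sqrt_sq hx, ← Real.sqrt_sq hr, ← Real.sqrt_mul (sq_nonneg x),
    ← Real.sqrt_mul (sq_nonneg r), Real.sqrt_sq hx]
  congr 1
  rw [← mul_div_assoc, ← mul_div_assoc, sq, mul_assoc, h]
  ring

theorem sub_mul_add_eq_sq_of_eq_sub_add_sqrt {p q r l m : ℝ} (hdisc : 4 * r ^ 2 ≤ (p + q) ^ 2)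
    (hl : 2 * l = p - q + √((p + q) ^ 2 - 4 * r ^ 2))
    (hm : 2 * m = q - p + √((p + q) ^ 2 - 4 * r ^ 2)) :
    (p - l) * (m + p) = r ^ 2 := by
  have hsq := Real.sq_sqrt (sub_nonneg.2 hdisc)
  linear_combination (-1 / 4 : ℝ) * hsq + (p + q - √((p + q) ^ 2 - 4 * r ^ 2)) / 4 * hm
    - (p + m) / 2 * hl

theorem Fintype.sum_mul_ite_add_mul_ite {ι R : Type*} [Fintype ι] [DecidableEq ι] [Semiring R]
    (i j : ι) (x y : R) (f g : ι → R) :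
    ∑ m, (x * (if i = m then 1 else 0) * f m + y * (if m = j then 1 else 0) * g m) =
      x * f i + y * g j := by
  simp [Finset.sum_add_distrib]

theorem two_mode_eigen_equations {p q l s t : ℝ} (z : ℂ) (hl : l ≠ 0)
    (hs : (p - l) * s = ‖z‖ * t) (ht : (l + q) * t = ‖z‖ * s) :
    (s : ℂ) = 1 / l * (s * p + -(t * exp (-arg z * I)) * z) ∧
      -(t * exp (-arg z * I)) = -1 / l * (s * conj z + -(t * exp (-arg z * I)) * q) := by
  have hl' : (l : ℂ) ≠ 0 := ofReal_ne_zero.2 hl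
  have hs' : ((p - l) * s : ℂ) = ‖z‖ * t := by exact_mod_cast hs
  have ht' : ((l + q) * t : ℂ) = ‖z‖ * s := by exact_mod_cast ht
  have hze := z.mul_exp_neg_arg_mul_I
  have hconj := z.conj_eq_norm_mul_exp_neg_arg_mul_I
  set e := exp (-arg z * I)
  constructor
  · field_simp
    linear_combination -hs' + t * hze
  · field_simp
    linear_combination (-e) * ht' + s * hconj

end

/-- Direct verification that the S-J coefficients `α, β` (built from the eigenvalues `λₙ`
of the Pauli–Jordan operator under the plane-wave assumptions
`⟨u_k,u_m⟩ = ⟨u_k,u_k⟩δ_{km}`, `⟨u_k,ū_m⟩ = ⟨u_k,ū_{-k}⟩δ_{k,-m}`)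
solve the eigenfunction equations
`αₙₖ = (1/λₙ) ∑ₘ αₙₘ⟨u_k,u_m⟩ + βₙₘ⟨u_k,ū_m⟩` and
`βₙₖ = (-1/λₙ) ∑ₘ αₙₘ⟨ū_k,u_m⟩ + βₙₘ⟨ū_k,ū_m⟩`. -/
theorem sj_coefficients_solve_eigen_equations
    {ι : Type*} [Fintype ι] [DecidableEq ι]
    (neg : ι → ι) (hneg : ∀ n, neg (neg n) = n)
    (a lam : ι → ℝ) (c : ι → ℂ)
    (ha : ∀ n, 0 < a n)
    (hc : ∀ n, c (neg n) = c n)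
    (hlam_pos : ∀ n, 0 < lam n)
    (hlam_le : ∀ n, lam n ≤ a n)
    (hdisc : ∀ n, 4 * ‖c n‖ ^ 2 ≤ (a n + a (neg n)) ^ 2)
    (hlam : ∀ n, 2 * lam n = a n - a (neg n) +
      Real.sqrt ((a n + a (neg n)) ^ 2 - 4 * ‖c n‖ ^ 2))
    (α β : ι → ι → ℂ)
    (hα : ∀ n k, α n k =
      ((Real.sqrt ((lam (neg n) + a n) / (lam n * (lam n + lam (neg n)))) : ℝ) : ℂ)
        * (if n = k then 1 else 0))
    (hβ : ∀ n k, β n k =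
      -(((Real.sqrt ((a n - lam n) / (lam n * (lam n + lam (neg n)))) : ℝ) : ℂ)
        * Complex.exp (-((c n).arg : ℂ) * Complex.I))
        * (if k = neg n then 1 else 0))
    -- the inner products ⟨u_k,u_m⟩, ⟨u_k,ū_m⟩, ⟨ū_k,u_m⟩, ⟨ū_k,ū_m⟩
    (A B B' A' : ι → ι → ℂ)
    (hA : ∀ k m, A k m = if k = m then ((a k : ℝ) : ℂ) else 0)
    (hB : ∀ k m, B k m = if m = neg k then c k else 0)
    (hB' : ∀ k m, B' k m = if k = neg m then (starRingEnd ℂ) (c m) else 0)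
    (hA' : ∀ k m, A' k m = if k = m then ((a k : ℝ) : ℂ) else 0) :
    (∀ n k, α n k = (1 / ((lam n : ℝ) : ℂ)) * ∑ m, (α n m * A k m + β n m * B k m)) ∧
    (∀ n k, β n k = (-1 / ((lam n : ℝ) : ℂ)) * ∑ m, (α n m * B' k m + β n m * A' k m)) := by
  have hlam_neg n : 2 * lam (neg n) =
      a (neg n) - a n + √((a n + a (neg n)) ^ 2 - 4 * ‖c n‖ ^ 2) := by
    simpa only [hneg, hc, add_comm (a (neg n))] using hlam (neg n)
  have hchar n : (a n - lam n) * (lam (neg n) + a n) = ‖c n‖ ^ 2 :=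
    sub_mul_add_eq_sq_of_eq_sub_add_sqrt (hdisc n) (hlam n) (hlam_neg n)
  have hshift n : lam n + a (neg n) = lam (neg n) + a n := by linarith [hlam n, hlam_neg n]
  have hmode n := two_mode_eigen_equations (q := a (neg n)) (c n) (hlam_pos n).ne'
    (Real.mul_sqrt_div_eq_of_mul_eq_sq (lam n * (lam n + lam (neg n)))
      (sub_nonneg.2 (hlam_le n)) (norm_nonneg _) (hchar n))
    (by
      rw [hshift]
      exact Real.mul_sqrt_div_eq_of_mul_eq_sq _ (add_nonneg (hlam_pos _).le (ha n).le)
        (norm_nonneg _) (by rw [mul_comm, hchar]))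
  have hneg_inj : Function.Injective neg := Function.LeftInverse.injective hneg
  refine ⟨fun n k => ?_, fun n k => ?_⟩
  · simp only [hα, hβ, Fintype.sum_mul_ite_add_mul_ite, hA, hB]
    by_cases hk : k = n
    · subst hk
      simpa only [↓reduceIte, mul_one] using (hmode k).1
    · simp [hk, Ne.symm hk, hneg_inj.ne_iff]
  · simp only [hα, hβ, Fintype.sum_mul_ite_add_mul_ite, hA', hB']
    by_cases hk : k = neg n
    · subst hk
      simpa only [↓reduceIte, mul_one] using (hmode n).2
    · simp [hk]
end

section
/- In the 1+1-dimensional FLRW model with $C(\eta) = A + B\tanh(\rho\eta)$, the Bogoliubov coefficients $\alpha_k = (\omega^{out}/\omega^{in})^{1/2}\frac{\Gamma(1 - i\omega^{in}/\rho)\Gamma(-i\omega^{out}/\rho)}{\Gamma(1-i\omega^+/\rho)\Gamma(-i\omega^+/\rho)}$ and $\beta_k = (\omega^{out}/\omega^{in})^{1/2}\frac{\Gamma(1-i\omega^{in}/\rho)\Gamma(-i\omega^{out}/\rho)}{\Gamma(1+i\omega^- /\rho)\Gamma(i\omega^- /\rho)}$ satisfy the normalization $|\alpha_k|^2 - |\beta_k|^2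 = 1$. -/
noncomputable section

lemma sinh_sq_sub (x y : ℝ) : Real.sinh x ^ 2 - Real.sinh y ^ 2 = Real.sinh (x+y) * Real.sinh (x-y) := by
  rw [Real.sinh_add, Real.sinh_sub]
  nlinarith [Real.cosh_sq x, Real.cosh_sq y]

lemma y_sinh_pos (y : ℝ) (hy : y ≠ 0) : 0 < y * Real.sinh (Real.pi * y) := by
  rcases lt_or_gt_of_ne hy with h | h
  · have : Real.pi * y < 0 := mul_neg_of_pos_of_neg Real.pi_pos h
    have := Real.sinh_neg_iff.mpr this -- guess name
    exact mul_pos_of_neg_of_neg h this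
  · have : 0 < Real.pi * y := mul_pos Real.pi_pos h
    exact mul_pos h (Real.sinh_pos_iff.mpr this)

lemma norm_gamma_I_sq (y : ℝ) (hy : y ≠ 0) :
    ‖Complex.Gamma (Complex.I * y)‖ ^ 2 = Real.pi / (y * Real.sinh (Real.pi * y)) := by
  have hy' : (y:ℂ) ≠ 0 := Complex.ofReal_ne_zero.mpr hy
  have hz : (Complex.I * (y:ℂ)) ≠ 0 := mul_ne_zero Complex.I_ne_zero hy'
  have hsinh : Real.sinh (Real.pi * y) ≠ 0 := by
    simp [Real.sinh_eq_zero, Real.pi_ne_zero, hy]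
  have hs' : ((Real.sinh (Real.pi * y) : ℝ) : ℂ) ≠ 0 := Complex.ofReal_ne_zero.mpr hsinh
  have hconj : Complex.Gamma (-(Complex.I * y)) = starRingEnd ℂ (Complex.Gamma (Complex.I * y)) := by
    rw [← Complex.Gamma_conj]
    congr 1
    simp [Complex.conj_I]
  have h1 : Complex.Gamma (1 - Complex.I * y) = (-(Complex.I * y)) * Complex.Gamma (-(Complex.I * y)) := by
    have := Complex.Gamma_add_one (-(Complex.I * y)) (by simpa using hz)
    rw [← this]; ring_nf
  have hrefl := Complex.Gamma_mul_Gamma_one_sub (Complex.I * y)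
  rw [h1, show (↑Real.pi * (Complex.I * y) : ℂ) = ((Real.pi * y : ℝ) : ℂ) * Complex.I by push_cast; ring,
    Complex.sin_mul_I, ← Complex.ofReal_sinh] at hrefl
  have h3 : Complex.Gamma (Complex.I * y) * (-(Complex.I * y) * Complex.Gamma (-(Complex.I * y)))
      * (((Real.sinh (Real.pi * y) : ℝ) : ℂ) * Complex.I) = (Real.pi : ℂ) := by
    rw [hrefl, div_mul_cancel₀ _ (mul_ne_zero hs' Complex.I_ne_zero)]
  have key : Complex.Gamma (Complex.I * y) * Complex.Gamma (-(Complex.I * y))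
      = ((Real.pi / (y * Real.sinh (Real.pi * y)) : ℝ) : ℂ) := by
    rw [Complex.ofReal_div, Complex.ofReal_mul, eq_div_iff (mul_ne_zero hy' hs')]
    linear_combination h3 + Complex.Gamma (Complex.I * (y:ℂ)) * Complex.Gamma (-(Complex.I * (y:ℂ))) * (y:ℂ) * ((Real.sinh (Real.pi * y) : ℝ):ℂ) * Complex.I_sq
  have hnorm := congrArg norm key
  rw [norm_mul, hconj, RCLike.norm_conj, ← sq, Complex.norm_real, Real.norm_eq_abs] at hnorm
  rw [hnorm, abs_of_nonneg (div_nonneg Real.pi_pos.le (y_sinh_pos y hy).le)]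

lemma norm_gamma_one_add_I_sq (y : ℝ) (hy : y ≠ 0) :
    ‖Complex.Gamma (1 + Complex.I * y)‖ ^ 2 = Real.pi * y / Real.sinh (Real.pi * y) := by
  have hy' : (y:ℂ) ≠ 0 := Complex.ofReal_ne_zero.mpr hy
  have hz : (Complex.I * (y:ℂ)) ≠ 0 := mul_ne_zero Complex.I_ne_zero hy'
  have h1 : Complex.Gamma (1 + Complex.I * y) = (Complex.I * y) * Complex.Gamma (Complex.I * y) := by
    have := Complex.Gamma_add_one (Complex.I * y) hz
    rw [← this]; ring_nf
  have hsinh : Real.sinh (Real.pi * y) ≠ 0 := by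
    simp [Real.sinh_eq_zero, Real.pi_ne_zero, hy]
  rw [h1, norm_mul, mul_pow, norm_gamma_I_sq y hy]
  have : ‖Complex.I * (y:ℂ)‖ ^ 2 = y ^ 2 := by
    rw [norm_mul, Complex.norm_I, one_mul, Complex.norm_real, Real.norm_eq_abs, _root_.sq_abs]
  rw [this]
  field_simp

lemma norm_gamma_one_sub_I_sq (y : ℝ) (hy : y ≠ 0) :
    ‖Complex.Gamma (1 - Complex.I * y)‖ ^ 2 = Real.pi * y / Real.sinh (Real.pi * y) := by
  have : Complex.Gamma (1 - Complex.I * y) = starRingEnd ℂ (Complex.Gamma (1 + Complex.I * y)) := by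
    rw [← Complex.Gamma_conj]; congr 1; simp [Complex.conj_I]; ring
  rw [this, RCLike.norm_conj, norm_gamma_one_add_I_sq y hy]

/-- The Bogoliubov coefficients of the `C(η) = A + B tanh(ρη)` cosmological model satisfy
the normalization `|α_k|² - |β_k|² = 1`. -/
theorem bogoliubov_normalization (A B m ρ k : ℝ)
    (hB : 0 < B) (hAB : B < A) (hm : 0 < m) (hρ : 0 < ρ)
    (ωin ωout ωp ωm : ℝ)
    (hin : ωin = Real.sqrt (k ^ 2 + m ^ 2 * (A - B)))
    (hout : ωout = Real.sqrt (k ^ 2 + m ^ 2 * (A + B)))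
    (hp : ωp = (ωout + ωin) / 2) (hm' : ωm = (ωout - ωin) / 2)
    (α β : ℂ)
    (hα : α = ((Real.sqrt (ωout / ωin) : ℝ) : ℂ) *
      (Complex.Gamma (1 - Complex.I * (ωin : ℂ) / (ρ : ℂ)) *
        Complex.Gamma (-(Complex.I * (ωout : ℂ) / (ρ : ℂ)))) /
      (Complex.Gamma (1 - Complex.I * (ωp : ℂ) / (ρ : ℂ)) *
        Complex.Gamma (-(Complex.I * (ωp : ℂ) / (ρ : ℂ)))))
    (hβ : β = ((Real.sqrt (ωout / ωin) : ℝ) : ℂ) *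
      (Complex.Gamma (1 - Complex.I * (ωin : ℂ) / (ρ : ℂ)) *
        Complex.Gamma (-(Complex.I * (ωout : ℂ) / (ρ : ℂ)))) /
      (Complex.Gamma (1 + Complex.I * (ωm : ℂ) / (ρ : ℂ)) *
        Complex.Gamma (Complex.I * (ωm : ℂ) / (ρ : ℂ)))) :
    ‖α‖ ^ 2 - ‖β‖ ^ 2 = 1 := by
  have hρ' : ρ ≠ 0 := ne_of_gt hρ
  have hin_pos : 0 < ωin := by
    rw [hin]; exact Real.sqrt_pos.mpr (by nlinarith [sq_nonneg k, mul_pos (pow_pos hm 2) (sub_pos.mpr hAB)])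
  have hlt : ωin < ωout := by
    rw [hin, hout]
    exact Real.sqrt_lt_sqrt (by nlinarith [sq_nonneg k, mul_pos (pow_pos hm 2) (sub_pos.mpr hAB)]) (by nlinarith [pow_pos hm 2, mul_pos (pow_pos hm 2) hB])
  have hout_pos : 0 < ωout := lt_trans hin_pos hlt
  have hp_pos : 0 < ωp := by rw [hp]; linarith
  have hq_pos : 0 < ωm := by rw [hm']; linarith
  have ha : ωin / ρ ≠ 0 := ne_of_gt (div_pos hin_pos hρ)
  have hb : ωout / ρ ≠ 0 := ne_of_gt (div_pos hout_pos hρ)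
  have hpp : ωp / ρ ≠ 0 := ne_of_gt (div_pos hp_pos hρ)
  have hqq : ωm / ρ ≠ 0 := ne_of_gt (div_pos hq_pos hρ)
  have hbneg : -(ωout / ρ) ≠ 0 := neg_ne_zero.mpr hb
  have hpneg : -(ωp / ρ) ≠ 0 := neg_ne_zero.mpr hpp
  have e1 : (1 - Complex.I * (ωin : ℂ) / (ρ : ℂ)) = 1 - Complex.I * ((ωin/ρ : ℝ) : ℂ) := by
    push_cast; ring
  have e2 : (-(Complex.I * (ωout : ℂ) / (ρ : ℂ))) = Complex.I * ((-(ωout/ρ) : ℝ) : ℂ) := by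
    push_cast; ring
  have e3 : (1 - Complex.I * (ωp : ℂ) / (ρ : ℂ)) = 1 - Complex.I * ((ωp/ρ : ℝ) : ℂ) := by
    push_cast; ring
  have e4 : (-(Complex.I * (ωp : ℂ) / (ρ : ℂ))) = Complex.I * ((-(ωp/ρ) : ℝ) : ℂ) := by
    push_cast; ring
  have e5 : (1 + Complex.I * (ωm : ℂ) / (ρ : ℂ)) = 1 + Complex.I * ((ωm/ρ : ℝ) : ℂ) := by
    push_cast; ring
  have e6 : (Complex.I * (ωm : ℂ) / (ρ : ℂ)) = Complex.I * ((ωm/ρ : ℝ) : ℂ) := by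
    push_cast; ring
  have hsqrt : ‖((Real.sqrt (ωout / ωin) : ℝ) : ℂ)‖ ^ 2 = ωout / ωin := by
    rw [Complex.norm_real, Real.norm_eq_abs, _root_.sq_abs,
      Real.sq_sqrt (div_nonneg hout_pos.le hin_pos.le)]
  have hSa : Real.sinh (Real.pi * (ωin/ρ)) ≠ 0 := by
    simp [Real.sinh_eq_zero, Real.pi_ne_zero, ha]
  have hSb : Real.sinh (Real.pi * (ωout/ρ)) ≠ 0 := by
    simp [Real.sinh_eq_zero, Real.pi_ne_zero, hb]
  have hSp : Real.sinh (Real.pi * (ωp/ρ)) ≠ 0 := by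
    simp [Real.sinh_eq_zero, Real.pi_ne_zero, hpp]
  have hA2 : ‖α‖ ^ 2 = Real.sinh (Real.pi * (ωp/ρ)) ^ 2 /
      (Real.sinh (Real.pi * (ωin/ρ)) * Real.sinh (Real.pi * (ωout/ρ))) := by
    rw [hα, e1, e2, e3, e4]
    simp only [norm_div, norm_mul, div_pow, mul_pow]
    rw [hsqrt, norm_gamma_one_sub_I_sq _ ha, norm_gamma_I_sq _ hbneg,
      norm_gamma_one_sub_I_sq _ hpp, norm_gamma_I_sq _ hpneg,
      mul_neg, mul_neg, Real.sinh_neg, Real.sinh_neg]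
    field_simp
  have hB2 : ‖β‖ ^ 2 = Real.sinh (Real.pi * (ωm/ρ)) ^ 2 /
      (Real.sinh (Real.pi * (ωin/ρ)) * Real.sinh (Real.pi * (ωout/ρ))) := by
    rw [hβ, e1, e2, e5, e6]
    simp only [norm_div, norm_mul, div_pow, mul_pow]
    rw [hsqrt, norm_gamma_one_sub_I_sq _ ha, norm_gamma_I_sq _ hbneg,
      norm_gamma_one_add_I_sq _ hqq, norm_gamma_I_sq _ hqq,
      mul_neg, Real.sinh_neg]
    field_simp
  rw [hA2, hB2, div_sub_div_same, sinh_sq_sub,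
    show Real.pi * (ωp/ρ) + Real.pi * (ωm/ρ) = Real.pi * (ωout/ρ) by rw [hp, hm']; ring,
    show Real.pi * (ωp/ρ) - Real.pi * (ωm/ρ) = Real.pi * (ωin/ρ) by rw [hp, hm']; ring]
  rw [mul_comm (Real.sinh (Real.pi * (ωout/ρ)))]
  exact div_self (mul_ne_zero hSa hSb)
end
end
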